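/- Let AF = ⟨𝒜, ⇀⟩ be an argumentation framework, let agents 1,…,n have most preferred labelings ℒ₁,…,ℒₙ, let 𝒮 be any set of labelings, and let ℒ ∈ 𝒮. If ℒ is Pareto optimal in 𝒮 when every agent i has the Hamming distance based preference ⪰_{i,|⊖|}, then ℒ is Pareto optimal in 𝒮 when every agent i has the Hamming set based preference ⪰_{i,⊖}. Likewise, Pareto optimality in 𝒮 under the IUO Hamming distance based preferences (⪰_{i,|⊖ᴹ|}) implies Pareto optimality in 𝒮 under the IUO Hamming sets based preferences (⪰_{i,⊖ᴹ}); Pareto optimality under the Issue-wise distance based preferences (⪰_{i,|⊖_W|}) implies Pareto optimality under the Issue-wise set based preferences (⪰_{i,⊖_W}); and Pareto optimality under the IUO Issue-wise distance based preferences (⪰_{i,|⊖_Wᴹ|}) implies Pareto optimality under the IUO Issue-wise sets based preferences (⪰_{i,⊖_Wᴹ}). -/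
import Mathlib


/- Labels for arguments: in, out, undec -/
inductive Lab where
  | IN : Lab
  | OUT : Lab
  | UNDEC : Lab
deriving DecidableEq

variable {A : Type}

/-- Arguments labeled `in` by a labeling. -/
def labIn (L : A → Lab) : Set A := {a | L a = Lab.IN}
/-- Arguments labeled `out` by a labeling. -/
def labOut (L : A → Lab) : Set A := {a | L a = Lab.OUT}
/-- Arguments labeled `undec` by a labeling. -/
def labUndec (L : A → Lab) : Set A := {a | L a = Lab.UNDEC}
/-- Decided arguments: labeled `in` or `out`. -/
def labDec (L : A → Lab) : Set A := labIn L ∪ labOut L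

/-- Admissible labeling with respect to a defeat relation `df` (`df b a` : b defeats a). -/
def Admissible (df : A → A → Prop) (L : A → Lab) : Prop :=
  ∀ a : A,
    (L a = Lab.IN → ∀ b : A, df b a → L b = Lab.OUT) ∧
    (L a = Lab.OUT → ∃ b : A, df b a ∧ L b = Lab.IN)

/-- Complete labeling. -/
def Complete (df : A → A → Prop) (L : A → Lab) : Prop :=
  Admissible df L ∧
  ∀ a : A, L a = Lab.UNDEC →
    ¬ (∀ b : A, df b a → L b = Lab.OUT) ∧ ¬ (∃ b : A, df b a ∧ L b = Lab.IN)

/-- `L1 ⊑ L2` : less or equally committed. -/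
def LabLeq (L1 L2 : A → Lab) : Prop := labIn L1 ⊆ labIn L2 ∧ labOut L1 ⊆ labOut L2

/-- `L1 ≈ L2` : compatible labelings. -/
def LabCompatible (L1 L2 : A → Lab) : Prop :=
  labIn L1 ∩ labOut L2 = ∅ ∧ labOut L1 ∩ labIn L2 = ∅

/-- Hamming set `L1 ⊖ L2`. -/
def hamSet (L1 L2 : A → Lab) : Set A := {a | L1 a ≠ L2 a}
/-- Hamming distance `L1 |⊖| L2`. -/
noncomputable def hamDist (L1 L2 : A → Lab) : ℕ := (hamSet L1 L2).ncard

/-- in–out Hamming set `L1 ⊖ⁱᵒ L2`. -/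
def ioSet (L1 L2 : A → Lab) : Set A :=
  {a | (L1 a = Lab.IN ∧ L2 a = Lab.OUT) ∨ (L1 a = Lab.OUT ∧ L2 a = Lab.IN)}
/-- dec–undec Hamming set `L1 ⊖ᵈᵘ L2`. -/
def duSet (L1 L2 : A → Lab) : Set A :=
  {a | (a ∈ labDec L1 ∧ L2 a = Lab.UNDEC) ∨ (L1 a = Lab.UNDEC ∧ a ∈ labDec L2)}
/-- IUO Hamming sets `L1 ⊖ᴹ L2` as a pair. -/
def iuoSets (L1 L2 : A → Lab) : Set A × Set A := (ioSet L1 L2, duSet L1 L2)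
/-- Componentwise inclusion on pairs of sets. -/
def PairSub {α : Type} (p q : Set α × Set α) : Prop := p.1 ⊆ q.1 ∧ p.2 ⊆ q.2
/-- IUO Hamming distance `L1 |⊖ᴹ| L2`. -/
noncomputable def iuoDist (L1 L2 : A → Lab) : ℕ :=
  2 * (ioSet L1 L2).ncard + (duSet L1 L2).ncard

/-- Two arguments are in-sync (with respect to the complete labelings of the framework). -/
def InSync (df : A → A → Prop) (a b : A) : Prop :=
  (∀ L : A → Lab, Complete df L → L a = L b) ∨
  (∀ L : A → Lab, Complete df L →
    (L a = Lab.IN ↔ L b = Lab.OUT) ∧ (L a = Lab.OUT ↔ L b = Lab.IN))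

/-- An issue: an equivalence class of the in-sync relation. -/
def IsIssue (df : A → A → Prop) (B : Set A) : Prop :=
  ∃ a : A, B = {b | InSync df a b}

/-- Issue-wise set `L1 ⊖_W L2`. -/
def iwSet (df : A → A → Prop) (L1 L2 : A → Lab) : Set (Set A) :=
  {B | IsIssue df B ∧ ∃ a ∈ B, L1 a ≠ L2 a}
/-- Issue-wise distance `L1 |⊖_W| L2`. -/
noncomputable def iwDist (df : A → A → Prop) (L1 L2 : A → Lab) : ℕ := (iwSet df L1 L2).ncard

/-- in–out Issue-wise set `L1 ⊖_Wⁱᵒ L2`. -/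
def iwIoSet (df : A → A → Prop) (L1 L2 : A → Lab) : Set (Set A) :=
  {B | IsIssue df B ∧ ∃ a ∈ B, a ∈ ioSet L1 L2}
/-- dec–undec Issue-wise set `L1 ⊖_Wᵈᵘ L2`. -/
def iwDuSet (df : A → A → Prop) (L1 L2 : A → Lab) : Set (Set A) :=
  {B | IsIssue df B ∧ ∃ a ∈ B, a ∈ duSet L1 L2}
/-- IUO Issue-wise sets `L1 ⊖_Wᴹ L2` as a pair. -/
def iwIuoSets (df : A → A → Prop) (L1 L2 : A → Lab) : Set (Set A) × Set (Set A) :=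
  (iwIoSet df L1 L2, iwDuSet df L1 L2)
/-- IUO Issue-wise distance `L1 |⊖_Wᴹ| L2`. -/
noncomputable def iwIuoDist (df : A → A → Prop) (L1 L2 : A → Lab) : ℕ :=
  2 * (iwIoSet df L1 L2).ncard + (iwDuSet df L1 L2).ncard

/- Preferences: `pref Li L L'` means `L ⪰ L'` for an agent whose most preferred labeling is `Li`. -/
/-- Hamming set based preference `⪰_{i,⊖}`. -/
def hamSetPref (Li L L' : A → Lab) : Prop := hamSet L Li ⊆ hamSet L' Li
/-- Hamming distance based preference `⪰_{i,|⊖|}`. -/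
def hamDistPref (Li L L' : A → Lab) : Prop := hamDist L Li ≤ hamDist L' Li
/-- IUO Hamming sets based preference `⪰_{i,⊖ᴹ}`. -/
def iuoSetPref (Li L L' : A → Lab) : Prop := PairSub (iuoSets L Li) (iuoSets L' Li)
/-- IUO Hamming distance based preference `⪰_{i,|⊖ᴹ|}`. -/
def iuoDistPref (Li L L' : A → Lab) : Prop := iuoDist L Li ≤ iuoDist L' Li
/-- Issue-wise set based preference `⪰_{i,⊖_W}`. -/
def iwSetPref (df : A → A → Prop) (Li L L' : A → Lab) : Prop := iwSet df L Li ⊆ iwSet df L' Li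
/-- Issue-wise distance based preference `⪰_{i,|⊖_W|}`. -/
def iwDistPref (df : A → A → Prop) (Li L L' : A → Lab) : Prop := iwDist df L Li ≤ iwDist df L' Li
/-- IUO Issue-wise sets based preference `⪰_{i,⊖_Wᴹ}`. -/
def iwIuoSetPref (df : A → A → Prop) (Li L L' : A → Lab) : Prop :=
  PairSub (iwIuoSets df L Li) (iwIuoSets df L' Li)
/-- IUO Issue-wise distance based preference `⪰_{i,|⊖_Wᴹ|}`. -/
def iwIuoDistPref (df : A → A → Prop) (Li L L' : A → Lab) : Prop :=
  iwIuoDist df L Li ≤ iwIuoDist df L' Li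

/-- Strict part of a preference relation. -/
def StrictPref (pref : (A → Lab) → (A → Lab) → Prop) (L L' : A → Lab) : Prop :=
  pref L L' ∧ ¬ pref L' L

/-- `L'` Pareto dominates `L` with respect to the profile of preference relations `pref`. -/
def Dominates {ι : Type} (pref : ι → (A → Lab) → (A → Lab) → Prop) (L' L : A → Lab) : Prop :=
  (∀ i : ι, pref i L' L) ∧ ∃ j : ι, StrictPref (pref j) L' L

/-- `L` is Pareto optimal in `S`: no element of `S` Pareto dominates `L`. -/
def ParetoOptimalIn {ι : Type} (pref : ι → (A → Lab) → (A → Lab) → Prop)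
    (S : Set (A → Lab)) (L : A → Lab) : Prop :=
  ∀ L' ∈ S, ¬ Dominates pref L' L

/-- `LSO` is the skeptical outcome of profile `P`: the greatest admissible labeling below the
profile. -/
def IsSkeptical {n : ℕ} (df : A → A → Prop) (P : Fin n → (A → Lab)) (LSO : A → Lab) : Prop :=
  Admissible df LSO ∧ (∀ i : Fin n, LabLeq LSO (P i)) ∧
  ∀ L : A → Lab, Admissible df L → (∀ i : Fin n, LabLeq L (P i)) → LabLeq L LSO

/-- `LC` is the credulous initial outcome of the profile `P`. -/
def IsCio {n : ℕ} (P : Fin n → (A → Lab)) (LC : A → Lab) : Prop :=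
  ∀ a : A,
    (LC a = Lab.IN ↔ (∃ i : Fin n, P i a = Lab.IN) ∧ ∀ j : Fin n, P j a ≠ Lab.OUT) ∧
    (LC a = Lab.OUT ↔ (∃ i : Fin n, P i a = Lab.OUT) ∧ ∀ j : Fin n, P j a ≠ Lab.IN)

/-- `LCO` is the credulous outcome of `P`: the greatest admissible labeling `⊑ cio(P)`. -/
def IsCredulous {n : ℕ} (df : A → A → Prop) (P : Fin n → (A → Lab)) (LCO : A → Lab) : Prop :=
  ∃ LCIO : A → Lab, IsCio P LCIO ∧ Admissible df LCO ∧ LabLeq LCO LCIO ∧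
    ∀ L : A → Lab, Admissible df L → LabLeq L LCIO → LabLeq L LCO

/-- `LSCO` is the super credulous outcome of `P` given credulous outcome `LCO`:
the least complete labeling above `LCO`. -/
def IsSuperCredulousOf (df : A → A → Prop) (LCO LSCO : A → Lab) : Prop :=
  Complete df LSCO ∧ LabLeq LCO LSCO ∧
    ∀ L : A → Lab, Complete df L → LabLeq LCO L → LabLeq LSCO L

/-- Pareto optimality carries over from each distance-based class of preferences
to the corresponding set-based class, over any set of labelings. -/
theorem paretoOptimal_dist_to_set {A : Type} [Fintype A] {n : ℕ}
    (df : A → A → Prop) (Ls : Fin n → (A → Lab))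
    (S : Set (A → Lab)) (L : A → Lab) (hL : L ∈ S) :
    (ParetoOptimalIn (fun i : Fin n => hamDistPref (Ls i)) S L →
      ParetoOptimalIn (fun i : Fin n => hamSetPref (Ls i)) S L) ∧
    (ParetoOptimalIn (fun i : Fin n => iuoDistPref (Ls i)) S L →
      ParetoOptimalIn (fun i : Fin n => iuoSetPref (Ls i)) S L) ∧
    (ParetoOptimalIn (fun i : Fin n => iwDistPref df (Ls i)) S L →
      ParetoOptimalIn (fun i : Fin n => iwSetPref df (Ls i)) S L) ∧
    (ParetoOptimalIn (fun i : Fin n => iwIuoDistPref df (Ls i)) S L →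
      ParetoOptimalIn (fun i : Fin n => iwIuoSetPref df (Ls i)) S L) := by
  have key : ∀ {α : Type} [Finite α] (s t : Set α), s ⊆ t → s.ncard ≤ t.ncard := by
    intro α _ s t h
    exact Set.ncard_le_ncard h (Set.toFinite t)
  have keylt : ∀ {α : Type} [Finite α] (s t : Set α), s ⊆ t → ¬ t ⊆ s →
      s.ncard < t.ncard := by
    intro α _ s t h h'
    exact Set.ncard_lt_ncard (HasSubset.Subset.ssubset_of_not_subset h h') (Set.toFinite t)
  have pairle : ∀ {α : Type} [Finite α] (a b c d : Set α), a ⊆ c → b ⊆ d →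
      2 * a.ncard + b.ncard ≤ 2 * c.ncard + d.ncard := by
    intro α _ a b c d h1 h2
    have := key a c h1; have := key b d h2; omega
  have pairlt : ∀ {α : Type} [Finite α] (a b c d : Set α), a ⊆ c → b ⊆ d →
      ¬ (c ⊆ a ∧ d ⊆ b) → 2 * a.ncard + b.ncard < 2 * c.ncard + d.ncard := by
    intro α _ a b c d h1 h2 h3
    rcases not_and_or.mp h3 with h | h
    · have := keylt a c h1 h; have := key b d h2; omega
    · have := keylt b d h2 h; have := key a c h1; omega
  refine ⟨?_, ?_, ?_, ?_⟩
  · intro hPO L' hL' ⟨hall, j, hj1, hj2⟩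
    refine hPO L' hL' ⟨fun i => key _ _ (hall i), j, key _ _ hj1, ?_⟩
    simp only [hamDistPref, hamDist, not_le]
    exact keylt _ _ hj1 hj2
  · intro hPO L' hL' ⟨hall, j, hj1, hj2⟩
    refine hPO L' hL' ⟨fun i => pairle _ _ _ _ (hall i).1 (hall i).2,
      j, pairle _ _ _ _ hj1.1 hj1.2, ?_⟩
    simp only [iuoDistPref, iuoDist, not_le]
    exact pairlt _ _ _ _ hj1.1 hj1.2 hj2
  · intro hPO L' hL' ⟨hall, j, hj1, hj2⟩
    refine hPO L' hL' ⟨fun i => key _ _ (hall i), j, key _ _ hj1, ?_⟩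
    simp only [iwDistPref, iwDist, not_le]
    exact keylt _ _ hj1 hj2
  · intro hPO L' hL' ⟨hall, j, hj1, hj2⟩
    refine hPO L' hL' ⟨fun i => pairle _ _ _ _ (hall i).1 (hall i).2,
      j, pairle _ _ _ _ hj1.1 hj1.2, ?_⟩
    simp only [iwIuoDistPref, iwIuoDist, not_le]
    exact pairlt _ _ _ _ hj1.1 hj1.2 hj2
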